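/- Let t > 0 and x, y ∈ ℝ^d. Define G_t^{α_o,H}(x,y) = Σ_{ε∈{−1,1}^d} G_t(εx, y), where G_t is the Hermite heat kernel on ℝ^d and εx = (ε₁x₁,…,ε_dx_d). Then for x, y ∈ (0,∞)^d, G_t^{α_o,H}(x,y) equals (sinh 2t)^{-d} exp(-(1/2)coth(2t)(‖x‖²+‖y‖²)) ∏_{i=1}^d √(x_i y_i) I_{-1/2}(x_i y_i / sinh 2t), where I_{-1/2}(z) = √(2/(πz)) cosh z. -/

import Mathlib

/-!
Since `tanh t + coth t = 2 coth 2t` and `tanh t - coth t = -2 / sinh 2t`, the exponent of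
`G_t(u, v)` is `-½ coth(2t) (‖u‖² + ‖v‖²) + ⟨u, v⟩ / sinh 2t`. Reflecting coordinates of `x`
leaves the first term unchanged and only flips signs in `⟨εx, y⟩`, so the sum over `ε` factors
as `∏ᵢ 2 cosh(xᵢ yᵢ / sinh 2t)`. What remains is the identity of constants
`(2π sinh 2t)^(-d/2) 2^d = (sinh 2t)^(-d) ∏ᵢ √(xᵢ yᵢ) √(2 sinh 2t / (π xᵢ yᵢ))`.
-/

open Real

/-- The Hermite heat kernel on ℝ^d, written with explicit coordinate sums. -/
noncomputable def hermiteHeat (d : ℕ) (t : ℝ) (u v : Fin d → ℝ) : ℝ :=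
  (2 * Real.pi * Real.sinh (2 * t)) ^ (-(d : ℝ) / 2) *
    Real.exp (-(1 / 4) * (Real.tanh t * ∑ i, (u i + v i) ^ 2 +
      (Real.cosh t / Real.sinh t) * ∑ i, (u i - v i) ^ 2))

lemma hermite_exponent_eq {t : ℝ} (ht : t ≠ 0) (A B : ℝ) :
    -(1 / 4) * (tanh t * (A + 2 * B) + cosh t / sinh t * (A - 2 * B)) =
      -(1 / 2) * (cosh (2 * t) / sinh (2 * t)) * A + B / sinh (2 * t) := by
  have hs : sinh t ≠ 0 := sinh_ne_zero.mpr ht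
  have hc : cosh t ≠ 0 := (cosh_pos t).ne'
  rw [tanh_eq_sinh_div_cosh, cosh_two_mul, sinh_two_mul]
  field_simp
  linear_combination 8 * B * cosh_sq_sub_sinh_sq t

lemma sum_add_sq_eq {ι : Type*} [Fintype ι] (u v : ι → ℝ) :
    ∑ i, (u i + v i) ^ 2 = (∑ i, u i ^ 2) + (∑ i, v i ^ 2) + 2 * ∑ i, u i * v i := by
  simp only [add_sq, Finset.sum_add_distrib, Finset.mul_sum]
  ring_nf

lemma sum_sub_sq_eq {ι : Type*} [Fintype ι] (u v : ι → ℝ) :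
    ∑ i, (u i - v i) ^ 2 = (∑ i, u i ^ 2) + (∑ i, v i ^ 2) - 2 * ∑ i, u i * v i := by
  simp only [sub_sq, Finset.sum_add_distrib, Finset.sum_sub_distrib, Finset.mul_sum]
  ring_nf

lemma hermiteHeat_eq {d : ℕ} {t : ℝ} (ht : t ≠ 0) (u v : Fin d → ℝ) :
    hermiteHeat d t u v = (2 * π * sinh (2 * t)) ^ (-(d : ℝ) / 2) *
      exp (-(1 / 2) * (cosh (2 * t) / sinh (2 * t)) * ((∑ i, u i ^ 2) + ∑ i, v i ^ 2)) *
        exp ((∑ i, u i * v i) / sinh (2 * t)) := by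
  rw [hermiteHeat, sum_add_sq_eq, sum_sub_sq_eq, hermite_exponent_eq ht, exp_add, ← mul_assoc]

lemma sum_signs_exp_sum {ι : Type*} [Fintype ι] [DecidableEq ι] (a : ι → ℝ) :
    ∑ ε : ι → Bool, exp (∑ i, if ε i then a i else -a i) = ∏ i, 2 * cosh (a i) := by
  calc ∑ ε : ι → Bool, exp (∑ i, if ε i then a i else -a i)
      = ∑ ε : ι → Bool, ∏ i, exp (if ε i then a i else -a i) := by simp only [exp_sum]
    _ = ∏ i, ∑ b : Bool, exp (if b then a i else -a i) :=
      (Fintype.prod_sum fun i (b : Bool) => exp (if b then a i else -a i)).symm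
    _ = ∏ i, 2 * cosh (a i) := by
      simp only [Fintype.sum_bool, if_true, Bool.false_eq_true, if_false, cosh_eq,
        mul_div_cancel₀ _ (two_ne_zero' ℝ)]

lemma sum_hermiteHeat_signs {d : ℕ} {t : ℝ} (ht : t ≠ 0) (x y : Fin d → ℝ) :
    ∑ ε : Fin d → Bool, hermiteHeat d t (fun i => if ε i then x i else -x i) y =
      (2 * π * sinh (2 * t)) ^ (-(d : ℝ) / 2) *
        exp (-(1 / 2) * (cosh (2 * t) / sinh (2 * t)) * ((∑ i, x i ^ 2) + ∑ i, y i ^ 2)) *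
          ∏ i, 2 * cosh (x i * y i / sinh (2 * t)) := by
  have hsq (ε : Fin d → Bool) (i : Fin d) : (if ε i then x i else -x i) ^ 2 = x i ^ 2 := by
    split_ifs <;> ring
  have hcross (ε : Fin d → Bool) : (∑ i, (if ε i then x i else -x i) * y i) / sinh (2 * t) =
      ∑ i, if ε i then x i * y i / sinh (2 * t) else -(x i * y i / sinh (2 * t)) := by
    rw [Finset.sum_div]
    exact Finset.sum_congr rfl fun i _ => by split_ifs <;> ring
  simp only [hermiteHeat_eq ht, hsq, hcross, ← Finset.mul_sum, sum_signs_exp_sum]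

lemma sqrt_mul_sqrt_two_div_pi_mul_div {z : ℝ} (hz : 0 < z) (s : ℝ) :
    √z * √(2 / (π * (z / s))) = √(2 * s / π) := by
  rw [← sqrt_mul hz.le]
  congr 1
  field_simp

lemma rpow_neg_half_mul_two_pow {s : ℝ} (hs : 0 < s) (d : ℕ) :
    (2 * π * s) ^ (-(d : ℝ) / 2) * 2 ^ d = s ^ (-(d : ℝ)) * √(2 * s / π) ^ d := by
  have hsqrt : √(2 * π * s) * √(2 * s / π) = 2 * s := by
    rw [← sqrt_mul (by positivity), show 2 * π * s * (2 * s / π) = (2 * s) ^ 2 by field_simp,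
      sqrt_sq (by positivity)]
  rw [show -(d : ℝ) / 2 = -((1 / 2) * d) by ring, rpow_neg (by positivity),
    rpow_mul (by positivity), ← sqrt_eq_rpow, rpow_natCast, rpow_neg hs.le, rpow_natCast,
    ← inv_pow, ← inv_pow, ← mul_pow, ← mul_pow]
  congr 1
  have : 0 < √(2 * π * s) := sqrt_pos.mpr (by positivity)
  field_simp
  linarith

theorem stmt_19_general (d : ℕ) (t : ℝ) (ht : 0 < t) (x y : Fin d → ℝ)
    (hx : ∀ i, 0 < x i) (hy : ∀ i, 0 < y i) :
    (∑ ε : Fin d → Bool,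
        hermiteHeat d t (fun i => if ε i then x i else -x i) y) =
      (Real.sinh (2 * t)) ^ (-(d : ℝ)) *
        Real.exp (-(1 / 2) * (Real.cosh (2 * t) / Real.sinh (2 * t)) *
          ((∑ i, x i ^ 2) + ∑ i, y i ^ 2)) *
        ∏ i, Real.sqrt (x i * y i) *
          (Real.sqrt (2 / (Real.pi * (x i * y i / Real.sinh (2 * t)))) *
            Real.cosh (x i * y i / Real.sinh (2 * t))) := by
  have hs : 0 < sinh (2 * t) := sinh_pos_iff.mpr (by positivity)
  rw [sum_hermiteHeat_signs ht.ne']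
  simp only [← mul_assoc, sqrt_mul_sqrt_two_div_pi_mul_div (mul_pos (hx _) (hy _)),
    Finset.prod_mul_distrib, Finset.prod_const, Finset.card_univ, Fintype.card_fin]
  rw [mul_right_comm _ _ (2 ^ d), rpow_neg_half_mul_two_pow hs]
  ring

theorem stmt_19 (d : ℕ) (hd : 1 ≤ d) (t : ℝ) (ht : 0 < t) (x y : Fin d → ℝ)
    (hx : ∀ i, 0 < x i) (hy : ∀ i, 0 < y i) :
    (∑ ε : Fin d → Bool,
        hermiteHeat d t (fun i => if ε i then x i else -x i) y) =
      (Real.sinh (2 * t)) ^ (-(d : ℝ)) *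
        Real.exp (-(1 / 2) * (Real.cosh (2 * t) / Real.sinh (2 * t)) *
          ((∑ i, x i ^ 2) + ∑ i, y i ^ 2)) *
        ∏ i, Real.sqrt (x i * y i) *
          (Real.sqrt (2 / (Real.pi * (x i * y i / Real.sinh (2 * t)))) *
            Real.cosh (x i * y i / Real.sinh (2 * t))) :=
  stmt_19_general d t ht x y hx hy
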